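/- Let n, M, d be positive integers with d ≤ n. If there exists a binary code of length n, size M and minimum Hamming distance at least d, then there exists a set of M binary words of length 2n, each having 1-bounded running digital sum (1-BRDS), whose pairwise Hamming distances are all at least 2d. -/

import Mathlib

/-- The four-letter DNA alphabet. -/
inductive DNA | A | T | G | C
deriving DecidableEq

/-- Hamming distance between two words (of equal length) given as lists. -/
def hammingD {α : Type*} [DecidableEq α] (x y : List α) : ℕ :=
  (x.zip y).countP (fun p => decide (p.1 ≠ p.2))

/-- A binary word has `D`-bounded running digital sum if in every prefix the
numbers of ones and zeros differ by at most `D`. -/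
def brds (D : ℕ) (w : List Bool) : Prop :=
  ∀ k ≤ w.length,
    (((w.take k).count true : ℤ) - ((w.take k).count false : ℤ)).natAbs ≤ D

/-- The letters `G`, `C` of the DNA alphabet. -/
def isGC : DNA → Bool
  | DNA.G => true
  | DNA.C => true
  | _ => false

/-- A DNA word is `D`-GC-prefix-balanced if in every prefix the number of
letters from {G,C} and the number of letters from {A,T} differ by at most `D`. -/
def gcpb (D : ℕ) (w : List DNA) : Prop :=
  ∀ k ≤ w.length,
    (((w.take k).countP isGC : ℤ) - ((w.take k).countP (fun c => !(isGC c)) : ℤ)).natAbs ≤ D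

/-- A word is self-uncorrelated if no proper nonempty prefix equals the suffix
of the same length. -/
def selfUncorr {α : Type*} (w : List α) : Prop :=
  ∀ k, 1 ≤ k → k ≤ w.length - 1 → w.take k ≠ w.drop (w.length - k)

/-- A set of words is mutually uncorrelated if every word is self-uncorrelated
and for every ordered pair of distinct words `x`, `y` no nonempty prefix of `y`
equals a suffix of `x` of the same length. -/
def mutUncorr {α : Type*} (S : Set (List α)) : Prop :=
  (∀ w ∈ S, selfUncorr w) ∧
  ∀ x ∈ S, ∀ y ∈ S, x ≠ y →
    ∀ k, 1 ≤ k → k ≤ x.length → y.take k ≠ x.drop (x.length - k)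

/-- A Dyck word: equal numbers of ones and zeros, and every prefix has at least
as many ones as zeros. -/
def isDyck (w : List Bool) : Prop :=
  w.count true = w.count false ∧
  ∀ k ≤ w.length, (w.take k).count false ≤ (w.take k).count true

/-- The height of a (Dyck) word is at most `D`: in every prefix the number of
ones exceeds the number of zeros by at most `D`. -/
def heightLe (D : ℕ) (w : List Bool) : Prop :=
  ∀ k ≤ w.length, ((w.take k).count true : ℤ) - ((w.take k).count false : ℤ) ≤ (D : ℤ)

/-
Manchester-encode each codeword, `b ↦ b (¬b)`. Every pair of letters of the image is balanced,
so prefix sums stay in `{-1, 0, 1}`, and two codewords differing in a position differ in both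
letters of its image, which doubles the Hamming distance; the encoding is injective, so no
codewords are lost.
-/

def manchester (w : List Bool) : List Bool := w.flatMap fun b => [b, !b]

@[simp]
lemma manchester_nil : manchester [] = [] := rfl

@[simp]
lemma manchester_cons (b : Bool) (w : List Bool) :
    manchester (b :: w) = b :: (!b) :: manchester w := rfl

@[simp]
lemma length_manchester (w : List Bool) : (manchester w).length = 2 * w.length := by
  induction w with
  | nil => rfl
  | cons b w ih => simp only [manchester_cons, List.length_cons, ih]; omega

lemma manchester_injective : Function.Injective manchester := by
  intro x y hxy
  induction x generalizing y with
  | nil => cases y <;> simp_all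
  | cons b x ih =>
    cases y with
    | nil => simp at hxy
    | cons c y =>
      simp only [manchester_cons, List.cons.injEq] at hxy
      rw [hxy.1, ih hxy.2.2]

lemma hammingD_manchester (x y : List Bool) :
    hammingD (manchester x) (manchester y) = 2 * hammingD x y := by
  induction x generalizing y with
  | nil => simp [hammingD]
  | cons b x ih =>
    cases y with
    | nil => simp [hammingD]
    | cons c y =>
      have hxy := ih y
      simp only [hammingD, manchester_cons, List.zip_cons_cons, List.countP_cons] at hxy ⊢
      cases b <;> cases c <;> simp_all <;> omega

lemma brds_one_manchester (w : List Bool) : brds 1 (manchester w) := by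
  intro k hk
  induction w generalizing k with
  | nil => simp_all
  | cons b w ih =>
    match k with
    | 0 => simp
    | 1 => cases b <;> simp
    | k + 2 =>
      have hrest := ih k (by simp at hk ⊢; omega)
      simp only [manchester_cons, List.take_succ_cons]
      cases b <;> simp at hrest ⊢ <;> omega

theorem stmt0_general (n M d : ℕ)
    (h : ∃ C : Finset (List Bool), C.card = M ∧ (∀ w ∈ C, w.length = n) ∧
      ∀ x ∈ C, ∀ y ∈ C, x ≠ y → d ≤ hammingD x y) :
    ∃ C' : Finset (List Bool), C'.card = M ∧ (∀ w ∈ C', w.length = 2 * n) ∧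
      (∀ w ∈ C', brds 1 w) ∧
      ∀ x ∈ C', ∀ y ∈ C', x ≠ y → 2 * d ≤ hammingD x y := by
  obtain ⟨C, hcard, hlen, hdist⟩ := h
  refine ⟨C.image manchester, ?_, ?_, ?_, ?_⟩
  · rw [Finset.card_image_of_injective C manchester_injective, hcard]
  · simp only [Finset.mem_image, forall_exists_index, and_imp, forall_apply_eq_imp_iff₂]
    intro x hx
    rw [length_manchester, hlen x hx]
  · simp only [Finset.mem_image, forall_exists_index, and_imp, forall_apply_eq_imp_iff₂]
    exact fun x _ => brds_one_manchester x
  · simp only [Finset.mem_image, forall_exists_index, and_imp, forall_apply_eq_imp_iff₂]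
    intro x hx y hy hne
    rw [hammingD_manchester]
    exact Nat.mul_le_mul_left 2 (hdist x hx y hy (ne_of_apply_ne manchester hne))

/-- If a binary code of length `n`, size `M`, minimum Hamming
distance at least `d` exists, then a 1-BRDS set of `M` binary words of length
`2n` with pairwise Hamming distances at least `2d` exists. -/
theorem stmt0 (n M d : ℕ) (hn : 0 < n) (hM : 0 < M) (hd : 0 < d) (hdn : d ≤ n)
    (h : ∃ C : Finset (List Bool), C.card = M ∧ (∀ w ∈ C, w.length = n) ∧
      ∀ x ∈ C, ∀ y ∈ C, x ≠ y → d ≤ hammingD x y) :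
    ∃ C' : Finset (List Bool), C'.card = M ∧ (∀ w ∈ C', w.length = 2 * n) ∧
      (∀ w ∈ C', brds 1 w) ∧
      ∀ x ∈ C', ∀ y ∈ C', x ≠ y → 2 * d ≤ hammingD x y :=
  stmt0_general n M d h
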